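/- Let (a,b,c) be an ABC-solution, n ≥ 2 an even integer, and (A,B,C) = Θ_n(a,b,c). Then log rad(|A·B·C|) ≤ log|a−b| + log rad(|a·b·c|) + (n−2)·log c + log(2n). -/
import Mathlib


/-- An ABC-solution: distinct, pairwise coprime integers with a+b+c = 0, a < 0, b < 0. -/
def IsABCSolution (a b c : ℤ) : Prop :=
  a + b + c = 0 ∧ a < 0 ∧ b < 0 ∧
  a ≠ b ∧ b ≠ c ∧ a ≠ c ∧
  IsCoprime a b ∧ IsCoprime b c ∧ IsCoprime a c

/-- The radical of a natural number: the product of its distinct prime factors. -/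
def rad (n : ℕ) : ℕ := ∏ p ∈ n.primeFactors, p

/-- The quality function f((a,b,c),ε) = log c − (1+ε)·log rad(|a·b·c|). -/
noncomputable def fABC (a b c : ℤ) (ε : ℝ) : ℝ :=
  Real.log (c : ℝ) - (1 + ε) * Real.log (rad (a * b * c).natAbs : ℝ)

/-- The operation Θ_n on ABC-solutions, with m = n if c is even and m = 0 otherwise.
The divisions are exact integer divisions. -/
def theta (n : ℕ) (a b c : ℤ) : ℤ × ℤ × ℤ :=
  let m : ℕ := if 2 ∣ c then n else 0
  (-((a - b) ^ n / 2 ^ m), -((c ^ n - (a - b) ^ n) / 2 ^ m), c ^ n / 2 ^ m)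

lemma rad_pos (n : ℕ) : 0 < rad n :=
  Finset.prod_pos fun _ hp => (Nat.prime_of_mem_primeFactors hp).pos

lemma rad_dvd_self (n : ℕ) : rad n ∣ n := Nat.prod_primeFactors_dvd n

lemma rad_dvd_rad_of_dvd {x y : ℕ} (h : x ∣ y) (hy : y ≠ 0) : rad x ∣ rad y :=
  Finset.prod_dvd_prod_of_subset _ _ _ (Nat.primeFactors_mono h hy)

lemma rad_mul_dvd (x y : ℕ) : rad (x * y) ∣ rad x * rad y := by
  rcases eq_or_ne x 0 with rfl | hx
  · simp [rad]
  rcases eq_or_ne y 0 with rfl | hy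
  · simp [rad]
  rw [rad, Nat.primeFactors_mul hx hy, ← Finset.union_sdiff_self_eq_union,
    Finset.prod_union Finset.disjoint_sdiff]
  exact mul_dvd_mul_left _
    (Finset.prod_dvd_prod_of_subset _ _ _ (Finset.sdiff_subset))

lemma rad_pow (x : ℕ) {n : ℕ} (h : n ≠ 0) : rad (x ^ n) = rad x := by
  rw [rad, Nat.primeFactors_pow x h, rad]

lemma rad_mul_coprime {x y : ℕ} (h : Nat.Coprime x y) :
    rad (x * y) = rad x * rad y := by
  rw [rad, h.primeFactors_mul, Finset.prod_union h.disjoint_primeFactors, rad, rad]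

lemma rad_four : rad 4 = 2 := by
  have : (4:ℕ).primeFactors = {2} := by
    rw [show (4:ℕ) = 2^2 by norm_num, Nat.primeFactors_prime_pow (by norm_num) Nat.prime_two]
  rw [rad, this, Finset.prod_singleton]

/-- bound on the radical of A·B·C where (A,B,C) = Θ_n(a,b,c). -/
theorem log_rad_theta_le (a b c : ℤ) (h : IsABCSolution a b c)
    (n : ℕ) (hn : 2 ≤ n) (hev : Even n) :
    Real.log (rad ((theta n a b c).1 * (theta n a b c).2.1 *
        (theta n a b c).2.2).natAbs : ℝ) ≤
      Real.log (|(a : ℝ) - b|) + Real.log (rad (a * b * c).natAbs : ℝ) +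
        ((n : ℝ) - 2) * Real.log (c : ℝ) + Real.log (2 * n) := by
  obtain ⟨hsum, ha, hb, hab, hbc, hac, cab, cbc, cac⟩ := h
  have hc : 0 < c := by linarith
  obtain ⟨t, ht⟩ := hev
  have ht1 : 1 ≤ t := by omega
  have hn0 : n ≠ 0 := by omega
  have hd0 : a - b ≠ 0 := sub_ne_zero.mpr hab
  -- |a-b| < c, in square form
  have hdc2 : (a - b) ^ 2 < c ^ 2 := by nlinarith [mul_pos (neg_pos.mpr ha) (neg_pos.mpr hb)]
  have hc2d : c ^ 2 - (a - b) ^ 2 = 4 * (a * b) := by linear_combination (c - a - b) * hsum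
  -- the cofactor K
  set K : ℤ := ∑ i ∈ Finset.range t, (c ^ 2) ^ i * ((a - b) ^ 2) ^ (t - 1 - i) with hKdef
  have hK : K * (c ^ 2 - (a - b) ^ 2) = c ^ n - (a - b) ^ n := by
    have h1 := geom_sum₂_mul (c ^ 2) ((a - b) ^ 2) t
    rw [← pow_mul, ← pow_mul, show 2 * t = n by omega] at h1
    exact h1
  have hdn : (a - b) ^ n < c ^ n := by
    have h1 : ((a - b) ^ 2) ^ t < (c ^ 2) ^ t :=
      pow_lt_pow_left₀ hdc2 (sq_nonneg _) (by omega)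
    rwa [← pow_mul, ← pow_mul, show 2 * t = n by omega] at h1
  have hKpos : 0 < K := by
    have h1 : 0 < K * (c ^ 2 - (a - b) ^ 2) := by rw [hK]; linarith
    rcases mul_pos_iff.mp h1 with ⟨h2, _⟩ | ⟨_, h3⟩
    · exact h2
    · linarith
  have hKbound : K ≤ (t : ℤ) * c ^ (n - 2) := by
    have hterm : ∀ i ∈ Finset.range t,
        (c ^ 2) ^ i * ((a - b) ^ 2) ^ (t - 1 - i) ≤ c ^ (n - 2) := by
      intro i hi
      rw [Finset.mem_range] at hi
      calc (c ^ 2) ^ i * ((a - b) ^ 2) ^ (t - 1 - i)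
          ≤ (c ^ 2) ^ i * (c ^ 2) ^ (t - 1 - i) :=
            mul_le_mul_of_nonneg_left
              (pow_le_pow_left₀ (sq_nonneg _) hdc2.le _) (by positivity)
        _ = (c ^ 2) ^ (i + (t - 1 - i)) := by rw [pow_add]
        _ = c ^ (n - 2) := by
            rw [← pow_mul]
            congr 1
            omega
    calc K ≤ ∑ _i ∈ Finset.range t, c ^ (n - 2) := Finset.sum_le_sum hterm
      _ = (t : ℤ) * c ^ (n - 2) := by
          rw [Finset.sum_const, Finset.card_range, nsmul_eq_mul]
  -- the product of the theta components divides the undneivided product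
  have key : ∃ e : ℤ, ((theta n a b c).1 * (theta n a b c).2.1 *
      (theta n a b c).2.2) * e = (a - b) ^ n * (c ^ n - (a - b) ^ n) * c ^ n := by
    by_cases hc2 : (2:ℤ) ∣ c
    · refine ⟨(2 ^ n) * (2 ^ n) * (2 ^ n), ?_⟩
      have hda : ¬ (2:ℤ) ∣ a := by
        intro h2a
        obtain ⟨u, v, huv⟩ := cac
        have : (2:ℤ) ∣ 1 := huv ▸ dvd_add (h2a.mul_left u) (hc2.mul_left v)
        norm_num at this
      have hdb : ¬ (2:ℤ) ∣ b := by
        intro h2b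
        obtain ⟨u, v, huv⟩ := cbc
        have : (2:ℤ) ∣ 1 := huv ▸ dvd_add (h2b.mul_left u) (hc2.mul_left v)
        norm_num at this
      have h2d : (2:ℤ) ∣ a - b := by omega
      have hx : (2:ℤ) ^ n ∣ (a - b) ^ n := pow_dvd_pow_of_dvd h2d n
      have hy : (2:ℤ) ^ n ∣ c ^ n := pow_dvd_pow_of_dvd hc2 n
      have hz : (2:ℤ) ^ n ∣ c ^ n - (a - b) ^ n := dvd_sub hy hx
      simp only [theta, if_pos hc2]
      calc -((a - b) ^ n / 2 ^ n) * -((c ^ n - (a - b) ^ n) / 2 ^ n) * (c ^ n / 2 ^ n) *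
            (2 ^ n * 2 ^ n * 2 ^ n)
          = ((a - b) ^ n / 2 ^ n * 2 ^ n) * ((c ^ n - (a - b) ^ n) / 2 ^ n * 2 ^ n) *
            (c ^ n / 2 ^ n * 2 ^ n) := by ring
        _ = (a - b) ^ n * (c ^ n - (a - b) ^ n) * c ^ n := by
            rw [Int.ediv_mul_cancel hx, Int.ediv_mul_cancel hz, Int.ediv_mul_cancel hy]
    · refine ⟨1, ?_⟩
      simp only [theta, if_neg hc2, pow_zero, Int.ediv_one]
      ring
  obtain ⟨e, hkey⟩ := key
  -- pass to natural numbers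
  set P : ℤ := (theta n a b c).1 * (theta n a b c).2.1 * (theta n a b c).2.2 with hPdef
  have hPdvd : P ∣ (a - b) ^ n * (c ^ n - (a - b) ^ n) * c ^ n := ⟨e, hkey.symm⟩
  have hX0 : (a - b) ^ n * (c ^ n - (a - b) ^ n) * c ^ n ≠ 0 := by
    apply mul_ne_zero (mul_ne_zero (pow_ne_zero n hd0) (by linarith)) (by positivity)
  have hNdvd : P.natAbs ∣ ((a - b) ^ n * (c ^ n - (a - b) ^ n) * c ^ n).natAbs :=
    Int.natAbs_dvd_natAbs.mpr hPdvd
  -- decompose the big product's radical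
  have hfac : c ^ n - (a - b) ^ n = 4 * ((a * b) * K) := by
    rw [← hK, hc2d]; ring
  have hXsplit : ((a - b) ^ n * (c ^ n - (a - b) ^ n) * c ^ n).natAbs =
      ((a - b).natAbs ^ n * (4 * ((a * b).natAbs * K.natAbs))) * c.natAbs ^ n := by
    rw [Int.natAbs_mul, Int.natAbs_mul, Int.natAbs_pow, Int.natAbs_pow, hfac,
      Int.natAbs_mul, Int.natAbs_mul]
    norm_num
  have hcA1 : 1 ≤ c.natAbs := by
    rw [Nat.one_le_iff_ne_zero, Int.natAbs_ne_zero]; exact hc.ne'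
  have hdA1 : 1 ≤ (a - b).natAbs := by
    rw [Nat.one_le_iff_ne_zero, Int.natAbs_ne_zero]; exact hd0
  -- radical divisibility chain
  have hchain : rad P.natAbs ∣
      rad (a - b).natAbs * (2 * (rad (a * b).natAbs * rad K.natAbs)) * rad c.natAbs := by
    have h1 : rad P.natAbs ∣
        rad (((a - b) ^ n * (c ^ n - (a - b) ^ n) * c ^ n).natAbs) :=
      rad_dvd_rad_of_dvd hNdvd (by rwa [Int.natAbs_ne_zero])
    rw [hXsplit] at h1
    refine h1.trans ?_
    refine (rad_mul_dvd _ _).trans ?_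
    have h2 : rad ((a - b).natAbs ^ n * (4 * ((a * b).natAbs * K.natAbs))) ∣
        rad (a - b).natAbs * (2 * (rad (a * b).natAbs * rad K.natAbs)) := by
      refine (rad_mul_dvd _ _).trans ?_
      rw [rad_pow _ hn0]
      refine mul_dvd_mul_left _ ?_
      refine (rad_mul_dvd _ _).trans ?_
      rw [rad_four]
      exact mul_dvd_mul_left _ (rad_mul_dvd _ _)
    rw [rad_pow _ hn0]
    exact mul_dvd_mul h2 dvd_rfl
  -- coprimality : rad |ab| * rad |c| = rad |abc|
  have hcop : Nat.Coprime ((a * b).natAbs) (c.natAbs) := by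
    have : IsCoprime (a * b) c := IsCoprime.mul_left cac cbc
    exact Int.isCoprime_iff_gcd_eq_one.mp this
  have hradsplit : rad ((a * b * c).natAbs) = rad (a * b).natAbs * rad c.natAbs := by
    rw [Int.natAbs_mul, rad_mul_coprime hcop]
  -- bound on K in ℕ
  have hkA : K.natAbs ≤ t * c.natAbs ^ (n - 2) := by
    have h1 : (K.natAbs : ℤ) ≤ (t : ℤ) * (c.natAbs : ℤ) ^ (n - 2) := by
      rw [Int.natAbs_of_nonneg hKpos.le, Int.natAbs_of_nonneg hc.le]
      exact hKbound
    exact_mod_cast h1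
  -- the main natural-number bound
  have hkApos : 0 < K.natAbs := Int.natAbs_pos.mpr hKpos.ne'
  have hmain : rad P.natAbs ≤
      (a - b).natAbs * rad ((a * b * c).natAbs) * c.natAbs ^ (n - 2) * (2 * n) := by
    have hpos : 0 < rad (a - b).natAbs * (2 * (rad (a * b).natAbs * rad K.natAbs)) *
        rad c.natAbs :=
      Nat.mul_pos (Nat.mul_pos (rad_pos _)
        (Nat.mul_pos two_pos (Nat.mul_pos (rad_pos _) (rad_pos _)))) (rad_pos _)
    calc rad P.natAbs
        ≤ rad (a - b).natAbs * (2 * (rad (a * b).natAbs * rad K.natAbs)) * rad c.natAbs :=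
          Nat.le_of_dvd hpos hchain
      _ ≤ (a - b).natAbs * (2 * (rad (a * b).natAbs * (t * c.natAbs ^ (n - 2)))) *
            rad c.natAbs := by
          gcongr
          · exact Nat.le_of_dvd (by omega) (rad_dvd_self _)
          · exact (Nat.le_of_dvd hkApos (rad_dvd_self _)).trans hkA
      _ = (a - b).natAbs * (rad (a * b).natAbs * rad c.natAbs) * c.natAbs ^ (n - 2) *
            (2 * t) := by ring
      _ ≤ (a - b).natAbs * (rad (a * b).natAbs * rad c.natAbs) * c.natAbs ^ (n - 2) *
            (2 * n) := by gcongr <;> omega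
      _ = (a - b).natAbs * rad ((a * b * c).natAbs) * c.natAbs ^ (n - 2) * (2 * n) := by
          rw [hradsplit]
  -- now take logarithms
  have hdne : ((a - b).natAbs : ℝ) ≠ 0 := Nat.cast_ne_zero.mpr (by omega)
  have hrne : ((rad ((a * b * c).natAbs)) : ℝ) ≠ 0 := by
    exact_mod_cast (rad_pos _).ne'
  have hcne : ((c.natAbs : ℝ)) ^ (n - 2) ≠ 0 :=
    pow_ne_zero _ (Nat.cast_ne_zero.mpr (by omega))
  have h2nne : (2 : ℝ) * (n : ℝ) ≠ 0 := by positivity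
  have hR : (((a - b).natAbs * rad ((a * b * c).natAbs) * c.natAbs ^ (n - 2) *
      (2 * n) : ℕ) : ℝ) = ((a - b).natAbs : ℝ) * ((rad ((a * b * c).natAbs)) : ℝ) *
      ((c.natAbs : ℝ)) ^ (n - 2) * (2 * (n : ℝ)) := by push_cast; ring
  have hlog : Real.log (rad P.natAbs : ℝ) ≤
      Real.log (((a - b).natAbs : ℝ) * ((rad ((a * b * c).natAbs)) : ℝ) *
        ((c.natAbs : ℝ)) ^ (n - 2) * (2 * (n : ℝ))) := by
    rw [← hR]
    exact Real.log_le_log (by exact_mod_cast rad_pos _) (by exact_mod_cast hmain)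
  refine hlog.trans (le_of_eq ?_)
  have h1 : ((a - b).natAbs : ℝ) = |(a : ℝ) - b| := by
    rw [Nat.cast_natAbs]
    push_cast
    ring_nf
  have hcastc : ((c.natAbs : ℝ)) = (c : ℝ) := by
    rw [Nat.cast_natAbs, abs_of_pos hc]
  rw [Real.log_mul (mul_ne_zero (mul_ne_zero hdne hrne) hcne) h2nne,
    Real.log_mul (mul_ne_zero hdne hrne) hcne,
    Real.log_mul hdne hrne, h1, hcastc, Real.log_pow, Nat.cast_sub hn]
  norm_num
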